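/- arXiv:2204.07858 — 2 statements merged into one kernel-verified Lean document; each statement's English description precedes it below -/
import Mathlib

section
/- Let n ≥ 4 be an even integer. For n/2 + 1 ≤ k ≤ n + 1 define the polynomial P_k(X) = (2X − n) · Σ_{i = n/2+1}^{k} C(k,i) (n/2)^{k−i} (X − n)^{i − n/2 − 1} in ℚ[X], and let e_{k,j} denote the coefficient of X^j in P_k. Then the (n/2 + 1) × (n/2 + 1) matrix N = (e_{k,j}) with rows indexed by j = 0, 1, …, n/2 and columns indexed by k = n/2 + 1, n/2 + 2, …, n + 1 has nonzero determinant. -/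
/-!
Write `m = ⌊n/2⌋` and `r = n/2 ∈ ℚ`. The column of `N` indexed by `k = m + 1 + c` is the
coefficient vector of `P_k`, truncated to degrees `≤ m`, and `P_k` has degree `c + 1` with
leading coefficient `2`: so `N` is upper Hessenberg with every subdiagonal entry equal to `2`.
Every `P_k` vanishes at `r`, so weighting row `j` by `r ^ j` annihilates each column whose
polynomial was not truncated, and leaves `-2 r ^ (m + 1) ≠ 0` in the last one. A kernel vector
of `N` therefore has vanishing last entry, and the subdiagonal propagates this to every entry.
-/

open Finset Polynomial Matrix

namespace Matrix

variable {A : Type*} [CommRing A] [IsDomain A] {m : ℕ}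

theorem det_ne_zero_of_hessenberg_of_vecMul {N : Matrix (Fin (m + 1)) (Fin (m + 1)) A}
    (h_below : ∀ i j : Fin (m + 1), (j : ℕ) + 1 < i → N i j = 0)
    (h_subdiag : ∀ j : Fin m, N j.succ j.castSucc ≠ 0) (w : Fin (m + 1) → A)
    (hw : ∀ j, j ≠ Fin.last m → (w ᵥ* N) j = 0) (hw_last : (w ᵥ* N) (Fin.last m) ≠ 0) :
    N.det ≠ 0 := by
  rw [Ne, ← exists_mulVec_eq_zero_iff]
  rintro ⟨v, hv_ne, hv⟩
  have h_last : v (Fin.last m) = 0 := by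
    have h : (w ᵥ* N) ⬝ᵥ v = 0 := by rw [← dotProduct_mulVec, hv, dotProduct_zero]
    rw [dotProduct, Fintype.sum_eq_single (Fin.last m) fun j hj => by rw [hw j hj, zero_mul]] at h
    exact (mul_eq_zero.mp h).resolve_left hw_last
  have h_tail : ∀ i : Fin (m + 1), ∀ j, i ≤ j → v j = 0 := by
    refine Fin.reverseInduction (fun j hj => ?_) (fun i ih j hj => ?_)
    · rwa [Fin.last_le_iff.mp hj]
    rcases hj.lt_or_eq with hj | rfl
    · exact ih j (Fin.castSucc_lt_iff_succ_le.mp hj)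
    have hrow := congrFun hv i.succ
    rw [mulVec, dotProduct, Fintype.sum_eq_single i.castSucc fun j hj => ?_] at hrow
    · exact (mul_eq_zero.mp hrow).resolve_left (h_subdiag i)
    rcases lt_or_gt_of_ne hj with hlt | hgt
    · rw [h_below _ _ (Nat.succ_lt_succ hlt), zero_mul]
    · rw [ih j (Fin.castSucc_lt_iff_succ_le.mp hgt), mul_zero]
  exact hv_ne (funext fun j => h_tail 0 j (Fin.zero_le j))

end Matrix

namespace Polynomial

variable {R : Type*} [CommRing R]

/-- The polynomial `P_k` of the statement is `pfPoly n (n / 2) (n / 2) k`. -/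
noncomputable def pfPoly (a b : R) (m k : ℕ) : R[X] :=
  (2 * X - C a) *
    ∑ i ∈ Icc (m + 1) k, C ((k.choose i : R) * b ^ (k - i)) * (X - C a) ^ (i - m - 1)

theorem natDegree_C_mul_X_sub_C_pow_le (c a : R) (d : ℕ) :
    (C c * (X - C a) ^ d).natDegree ≤ d :=
  (natDegree_C_mul_le _ _).trans <| natDegree_pow_le_of_le _ (natDegree_X_sub_C_le a) |>.trans
    (mul_one d).le

theorem natDegree_sum_C_mul_X_sub_C_pow_le (f : ℕ → R) (a : R) (m k : ℕ) :
    (∑ i ∈ Icc (m + 1) k, C (f i) * (X - C a) ^ (i - m - 1)).natDegree ≤ k - m - 1 :=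
  natDegree_sum_le_of_forall_le _ _ fun i hi =>
    (natDegree_C_mul_X_sub_C_pow_le _ _ _).trans (by have := (mem_Icc.mp hi).2; omega)

theorem coeff_sum_C_mul_X_sub_C_pow (f : ℕ → R) (a : R) {m k : ℕ} (hk : m + 1 ≤ k) :
    (∑ i ∈ Icc (m + 1) k, C (f i) * (X - C a) ^ (i - m - 1)).coeff (k - m - 1) = f k := by
  rw [finsetSum_coeff, sum_eq_single_of_mem k (mem_Icc.mpr ⟨hk, le_rfl⟩) fun i hi hik => ?_]
  · rw [coeff_C_mul, sub_eq_add_neg, ← C_neg, coeff_X_add_C_pow]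
    simp
  · refine coeff_eq_zero_of_natDegree_lt <| (natDegree_C_mul_X_sub_C_pow_le _ _ _).trans_lt ?_
    have := mem_Icc.mp hi
    omega

theorem natDegree_pfPoly_le (a b : R) {m k : ℕ} (hk : m + 1 ≤ k) :
    (pfPoly a b m k).natDegree ≤ k - m := by
  have h_lin : (2 * X - C a : R[X]).natDegree ≤ 1 := by compute_degree
  exact natDegree_mul_le.trans <|
    (add_le_add h_lin (natDegree_sum_C_mul_X_sub_C_pow_le _ _ _ _)).trans (by omega)

theorem coeff_pfPoly (a b : R) {m k : ℕ} (hk : m + 1 ≤ k) :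
    (pfPoly a b m k).coeff (k - m) = 2 := by
  have h_lin : (2 * X - C a : R[X]).natDegree ≤ 1 := by compute_degree
  rw [pfPoly, show k - m = 1 + (k - m - 1) by omega,
    coeff_mul_add_eq_of_natDegree_le h_lin (natDegree_sum_C_mul_X_sub_C_pow_le _ _ _ _),
    coeff_sum_C_mul_X_sub_C_pow _ _ hk]
  simp

theorem eval_pfPoly {a r : R} (b : R) (m k : ℕ) (h : 2 * r = a) :
    (pfPoly a b m k).eval r = 0 := by
  simp [pfPoly, h]

theorem vecMul_pow_of_coeff {m : ℕ} {p : Fin (m + 1) → R[X]}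
    (hp : ∀ c, (p c).natDegree ≤ m + 1) (r : R) (c : Fin (m + 1)) :
    ((fun j : Fin (m + 1) => r ^ (j : ℕ)) ᵥ* of fun j c => (p c).coeff j) c =
      (p c).eval r - (p c).coeff (m + 1) * r ^ (m + 1) := by
  rw [eval_eq_sum_range' (Nat.lt_succ_of_le (hp c)), sum_range_succ, add_sub_cancel_right,
    ← Fin.sum_univ_eq_sum_range (fun j => (p c).coeff j * r ^ j)]
  simp only [vecMul, dotProduct, of_apply, mul_comm]

end Polynomial

theorem broad_PF_coefficient_matrix_nonsingular_general (n : ℕ) (hn : 4 ≤ n) :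
    let P : ℕ → Polynomial ℚ := fun k =>
      (2 * Polynomial.X - Polynomial.C (n : ℚ)) *
        ∑ i ∈ Finset.Icc (n / 2 + 1) k,
          Polynomial.C ((k.choose i : ℚ) * ((n : ℚ) / 2) ^ (k - i)) *
            (Polynomial.X - Polynomial.C (n : ℚ)) ^ (i - n / 2 - 1)
    (Matrix.of fun (j k : Fin (n / 2 + 1)) =>
        (P (n / 2 + 1 + (k : ℕ))).coeff (j : ℕ)).det ≠ 0 := by
  intro P
  set m := n / 2
  set r : ℚ := n / 2
  set p : Fin (m + 1) → ℚ[X] := fun c => pfPoly (n : ℚ) r m (m + 1 + c)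
  change (of fun j c : Fin (m + 1) => (p c).coeff j).det ≠ 0
  have h_deg (c : Fin (m + 1)) : (p c).natDegree ≤ c + 1 :=
    (natDegree_pfPoly_le _ _ (by omega)).trans (by omega)
  have h_top (c : Fin (m + 1)) : (p c).coeff (c + 1) = 2 := by
    simpa [show m + 1 + c - m = c + 1 by omega] using
      coeff_pfPoly (n : ℚ) r (m := m) (k := m + 1 + c) (by omega)
  have h_row (c : Fin (m + 1)) : ((fun j : Fin (m + 1) => r ^ (j : ℕ)) ᵥ* of fun j c =>
      (p c).coeff j) c = -((p c).coeff (m + 1) * r ^ (m + 1)) := by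
    rw [vecMul_pow_of_coeff (fun c => (h_deg c).trans (by omega)), eval_pfPoly _ _ _ (by ring),
      zero_sub]
  refine det_ne_zero_of_hessenberg_of_vecMul (fun i j hij => ?_) (fun j => ?_)
    (fun j => r ^ (j : ℕ)) (fun c hc => ?_) ?_
  · exact coeff_eq_zero_of_natDegree_lt ((h_deg j).trans_lt hij)
  · rw [of_apply, Fin.val_succ, ← Fin.val_castSucc, h_top]
    exact two_ne_zero
  · rw [h_row, coeff_eq_zero_of_natDegree_lt ((h_deg c).trans_lt ?_), zero_mul, neg_zero]
    have := Fin.val_lt_last hc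
    omega
  · have h_last := h_top (Fin.last m)
    rw [Fin.val_last] at h_last
    have hr : r ≠ 0 := by positivity
    simp [h_row, h_last, hr]

/-- **Nonsingularity of the matrix controlling the broad Picard–Fuchs coefficients**
(from the proof of Lemma 5.14). Let `n ≥ 4` be even. For `n/2 + 1 ≤ k ≤ n + 1` let
`P_k(X) = (2X − n) · ∑_{i=n/2+1}^{k} C(k,i) (n/2)^{k−i} (X − n)^{i−n/2−1} ∈ ℚ[X]`, and let
`e_{k,j}` be the coefficient of `X^j` in `P_k`. Then the `(n/2+1) × (n/2+1)` matrix
`N = (e_{k,j})` with rows `j = 0, …, n/2` and columns `k = n/2+1, …, n+1` has nonzero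
determinant. -/
theorem broad_PF_coefficient_matrix_nonsingular (n : ℕ) (hn : 4 ≤ n) (hev : Even n) :
    let P : ℕ → Polynomial ℚ := fun k =>
      (2 * Polynomial.X - Polynomial.C (n : ℚ)) *
        ∑ i ∈ Finset.Icc (n / 2 + 1) k,
          Polynomial.C ((k.choose i : ℚ) * ((n : ℚ) / 2) ^ (k - i)) *
            (Polynomial.X - Polynomial.C (n : ℚ)) ^ (i - n / 2 - 1)
    (Matrix.of fun (j k : Fin (n / 2 + 1)) =>
        (P (n / 2 + 1 + (k : ℕ))).coeff (j : ℕ)).det ≠ 0 :=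
  broad_PF_coefficient_matrix_nonsingular_general n hn
end

section
/- Let n ≥ 4 be an even integer. For smooth functions f : (0,∞) → ℂ let (Df)(x) = x·f′(x), and define the operator P_br by (P_br f) = (D² − n²/4)^{n/2+1} f − 4 n^n x^{−n} · ((D − n/2)(D − n) f), where (D² − n²/4) denotes the operator f ↦ D(Df) − (n²/4) f, iterated n/2 + 1 times. If c_1, …, c_{n/2−1} are complex numbers such that P_br applied to the function x ↦ x^{n/2} Σ_{i=1}^{n/2−1} c_i (log x)^i vanishes identically on (0,∞), then c_1 = c_2 = ⋯ = c_{n/2−1} = 0. -/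
open Finset

/-- The operator `(D f)(x) = x · f′(x)` on functions `ℝ → ℂ`. -/
noncomputable def Dlog (f : ℝ → ℂ) : ℝ → ℂ := fun x => (x : ℂ) * deriv f x

/-- The operator `D − c`, i.e. `f ↦ (x ↦ x f′(x) − c f(x))`. -/
noncomputable def DlogShift (c : ℂ) (f : ℝ → ℂ) : ℝ → ℂ := fun x => Dlog f x - c * f x

/-! Under `x = eᵗ` the operator `D = x d/dx` becomes `d/dt`, so `D` acts on `x ^ m * p (log x)`
as `d/dX + m` acts on the polynomial `p`. For `m = n/2`, the operator `D² − m²` becomes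
`(d/dX + 2m) d/dX`, whose `(m+1)`-st power kills `p` because `deg p ≤ m`, while
`(D − m)(D − 2m)` becomes `(d/dX − m) d/dX`. The hypothesis thus says `p'' = m p'`, which forces
`p' = 0` by comparing degrees; and `p` has no constant term. -/

open Polynomial Set

theorem EqOn.iterate_of_semiconj {α β γ : Type*} {Φ : (β → γ) → β → γ} {F : α → β → γ}
    {L : α → α} {s : Set β} (hΦ : ∀ f g, EqOn f g s → EqOn (Φ f) (Φ g) s)
    (hL : ∀ a, EqOn (Φ (F a)) (F (L a)) s) (k : ℕ) (a : α) :
    EqOn (Φ^[k] (F a)) (F (L^[k] a)) s := by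
  induction k with
  | zero => exact eqOn_refl _ _
  | succ k ih =>
    rw [Function.iterate_succ_apply', Function.iterate_succ_apply']
    exact (hΦ _ _ ih).trans (hL _)

namespace Polynomial

theorem pow_mul_derivative_apply_eq_zero {R : Type*} [CommSemiring R]
    {T : Module.End R R[X]} (hT : Commute T derivative) {k : ℕ} {p : R[X]}
    (hp : p.natDegree < k) : ((T * derivative) ^ k : Module.End R R[X]) p = 0 := by
  rw [hT.mul_pow, Module.End.mul_apply, Module.End.pow_apply derivative,
    iterate_derivative_eq_zero hp, map_zero]

theorem eq_zero_of_derivative_eq_smul {R : Type*} [CommRing R] [IsDomain R]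
    {a : R} (ha : a ≠ 0) {q : R[X]} (h : derivative q = a • q) : q = 0 := by
  by_contra hq
  have hlt := degree_derivative_lt hq
  rw [h, smul_eq_C_mul, degree_C_mul ha] at hlt
  exact lt_irrefl _ hlt

theorem eq_zero_of_forall_eval_ofReal_eq_zero {q : ℂ[X]}
    (h : ∀ t : ℝ, q.eval (t : ℂ) = 0) : q = 0 :=
  eq_zero_of_infinite_isRoot q <|
    (infinite_range_of_injective Complex.ofReal_injective).mono (range_subset_iff.2 h)

end Polynomial

theorem dlog_congr {f g : ℝ → ℂ} {s : Set ℝ} (hs : IsOpen s) (h : EqOn f g s) :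
    EqOn (Dlog f) (Dlog g) s := fun x hx => by
  simp only [Dlog, (h.eventuallyEq_of_mem (hs.mem_nhds hx)).deriv_eq]

theorem dlogShift_congr (a : ℂ) {f g : ℝ → ℂ} {s : Set ℝ} (hs : IsOpen s) (h : EqOn f g s) :
    EqOn (DlogShift a f) (DlogShift a g) s := fun x hx => by
  simp only [DlogShift, dlog_congr hs h hx, h hx]

noncomputable def powLogPoly (m : ℕ) (p : ℂ[X]) : ℝ → ℂ :=
  fun x => (x : ℂ) ^ m * p.eval (Real.log x : ℂ)

noncomputable def eulerOp (m : ℕ) : Module.End ℂ ℂ[X] := derivative + (m : ℂ) • 1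

theorem eulerOp_apply (m : ℕ) (p : ℂ[X]) : eulerOp m p = derivative p + (m : ℂ) • p := rfl

theorem eulerOp_sub_self (m : ℕ) : eulerOp m - (m : ℂ) • 1 = derivative := by
  simp [eulerOp]

theorem commute_eulerOp_derivative (m : ℕ) : Commute (eulerOp m) derivative :=
  (Commute.refl _).add_left ((Commute.one_left _).smul_left _)

theorem eulerOp_sq_sub_sq (m : ℕ) :
    eulerOp m ^ 2 - ((m : ℂ) ^ 2) • 1 = (eulerOp m + (m : ℂ) • 1) * derivative := by
  rw [← eulerOp_sub_self, ← ((Commute.one_right _).smul_right _).sq_sub_sq, _root_.smul_pow,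
    one_pow]

theorem eulerOp_sub_mul_eulerOp_sub (m : ℕ) :
    (eulerOp m - (m : ℂ) • 1) * (eulerOp m - (2 * m : ℂ) • 1)
      = (derivative - (m : ℂ) • 1) * derivative := by
  have h2m : eulerOp m - (2 * m : ℂ) • 1 = derivative - (m : ℂ) • 1 := by
    rw [eulerOp, two_mul, add_smul]
    abel
  rw [eulerOp_sub_self, h2m, ((Commute.refl _).sub_right ((Commute.one_right _).smul_right _)).eq]

theorem hasDerivAt_powLogPoly (m : ℕ) (p : ℂ[X]) {x : ℝ} (hx : 0 < x) :
    HasDerivAt (powLogPoly m p)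
      ((m : ℂ) * (x : ℂ) ^ (m - 1) * p.eval (Real.log x : ℂ)
        + (x : ℂ) ^ m * (((x⁻¹ : ℝ) : ℂ) * (derivative p).eval (Real.log x : ℂ))) x := by
  have hpow : HasDerivAt (fun y : ℝ => (y : ℂ) ^ m) ((m : ℂ) * (x : ℂ) ^ (m - 1)) x := by
    simpa using (hasDerivAt_pow m x).ofReal_comp
  have hlog : HasDerivAt (fun y : ℝ => p.eval (Real.log y : ℂ))
      (((x⁻¹ : ℝ) : ℂ) * (derivative p).eval (Real.log x : ℂ)) x := by
    simpa [Complex.real_smul, Function.comp_def] using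
      ((p.hasDerivAt _).comp_ofReal).scomp x (Real.hasDerivAt_log hx.ne')
  exact hpow.mul hlog

theorem dlog_powLogPoly (m : ℕ) (p : ℂ[X]) :
    EqOn (Dlog (powLogPoly m p)) (powLogPoly m (eulerOp m p)) (Ioi 0) := by
  intro x hx
  have hx0 : (x : ℂ) ≠ 0 := by exact_mod_cast (ne_of_gt hx)
  have hxpow : (x : ℂ) * ((m : ℂ) * (x : ℂ) ^ (m - 1)) = m * (x : ℂ) ^ m := by
    cases m <;> simp [pow_succ]; ring
  simp only [Dlog, (hasDerivAt_powLogPoly m p hx).deriv, powLogPoly, eulerOp_apply, eval_add,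
    eval_smul, smul_eq_mul]
  push_cast
  field_simp
  linear_combination (eval (↑(Real.log x)) p) * hxpow

theorem dlogShift_powLogPoly (a : ℂ) (m : ℕ) (p : ℂ[X]) :
    EqOn (DlogShift a (powLogPoly m p)) (powLogPoly m ((eulerOp m - a • 1) p)) (Ioi 0) :=
  fun x hx => by
    simp only [DlogShift, dlog_powLogPoly m p hx, powLogPoly, LinearMap.sub_apply,
      LinearMap.smul_apply, Module.End.one_apply, eval_sub, eval_smul, smul_eq_mul]
    ring

theorem dlogShift_dlogShift_powLogPoly (a b : ℂ) (m : ℕ) (p : ℂ[X]) :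
    EqOn (DlogShift a (DlogShift b (powLogPoly m p)))
      (powLogPoly m (((eulerOp m - a • 1) * (eulerOp m - b • 1) : Module.End ℂ ℂ[X]) p))
      (Ioi 0) :=
  (dlogShift_congr a isOpen_Ioi (dlogShift_powLogPoly b m p)).trans
    (dlogShift_powLogPoly a m _)

theorem dlog_dlog_sub_powLogPoly (c : ℂ) (m : ℕ) (p : ℂ[X]) :
    EqOn (fun y => Dlog (Dlog (powLogPoly m p)) y - c * powLogPoly m p y)
      (powLogPoly m ((eulerOp m ^ 2 - c • 1 : Module.End ℂ ℂ[X]) p)) (Ioi 0) := fun x hx => by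
  dsimp only
  rw [dlog_congr isOpen_Ioi (dlog_powLogPoly m p) hx, dlog_powLogPoly m _ hx]
  simp only [powLogPoly, pow_two, LinearMap.sub_apply, Module.End.mul_apply,
    LinearMap.smul_apply, Module.End.one_apply, eval_sub, eval_smul, smul_eq_mul]
  ring

theorem iterate_dlog_dlog_sub_powLogPoly (c : ℂ) (m k : ℕ) (p : ℂ[X]) :
    EqOn ((fun f y => Dlog (Dlog f) y - c * f y)^[k] (powLogPoly m p))
      (powLogPoly m (((eulerOp m ^ 2 - c • 1) ^ k : Module.End ℂ ℂ[X]) p)) (Ioi 0) := by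
  rw [Module.End.pow_apply]
  refine EqOn.iterate_of_semiconj (fun f g hfg x hx => ?_) (dlog_dlog_sub_powLogPoly c m) k p
  simp only [dlog_congr isOpen_Ioi (dlog_congr isOpen_Ioi hfg) hx, hfg hx]

theorem eq_zero_of_broadPF_powLogPoly_eq_zero {m : ℕ} (hm : m ≠ 0) {p : ℂ[X]}
    (hdeg : p.natDegree ≤ m) (h0 : p.coeff 0 = 0) {K : ℝ → ℂ} (hK : ∀ x, 0 < x → K x ≠ 0)
    (h : ∀ x : ℝ, 0 < x →
      (fun f y => Dlog (Dlog f) y - (m : ℂ) ^ 2 * f y)^[m + 1] (powLogPoly m p) x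
        - K x * DlogShift m (DlogShift (2 * m : ℂ) (powLogPoly m p)) x = 0) :
    p = 0 := by
  have hmC : (m : ℂ) ≠ 0 := Nat.cast_ne_zero.2 hm
  have hQ : ((eulerOp m ^ 2 - ((m : ℂ) ^ 2) • 1) ^ (m + 1) : Module.End ℂ ℂ[X]) p = 0 := by
    rw [eulerOp_sq_sub_sq]
    exact pow_mul_derivative_apply_eq_zero
      ((commute_eulerOp_derivative m).add_left ((Commute.one_left _).smul_left _))
      (Nat.lt_succ_of_le hdeg)
  have hR (t : ℝ) :
      eval (t : ℂ) (((derivative - (m : ℂ) • 1) * derivative : Module.End ℂ ℂ[X]) p) = 0 := by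
    have ht := h (Real.exp t) (Real.exp_pos t)
    rw [iterate_dlog_dlog_sub_powLogPoly _ m _ p (Real.exp_pos t), hQ,
      dlogShift_dlogShift_powLogPoly _ _ m p (Real.exp_pos t), eulerOp_sub_mul_eulerOp_sub] at ht
    simpa [powLogPoly, hK _ (Real.exp_pos t), Real.exp_ne_zero] using ht
  have hp' : derivative p = 0 := by
    refine eq_zero_of_derivative_eq_smul hmC ?_
    simpa [sub_eq_zero] using eq_zero_of_forall_eval_ofReal_eq_zero hR
  rw [eq_C_of_derivative_eq_zero hp', h0, map_zero]

/-- **The broad Picard–Fuchs operator kills no nontrivial logarithmic term**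
(Lemma 5.16). Let `n ≥ 4` be even and let
`P_br = (D² − n²/4)^{n/2+1} − 4 nⁿ x^{−n} (D − n/2)(D − n)` with `(D f)(x) = x f′(x)`.
If `c₁, …, c_{n/2−1} ∈ ℂ` are such that `P_br` applied to
`x ↦ x^{n/2} ∑_{i=1}^{n/2−1} cᵢ (log x)^i` vanishes identically on `(0,∞)`, then all the
`cᵢ` vanish. -/
theorem broad_PF_log_terms_vanish (n : ℕ) (hn : 4 ≤ n) (hev : Even n) (c : ℕ → ℂ)
    (h : ∀ x : ℝ, 0 < x →
      ((fun f : ℝ → ℂ => fun y => Dlog (Dlog f) y - ((n : ℂ) ^ 2 / 4) * f y)^[n / 2 + 1]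
          (fun y : ℝ => (y : ℂ) ^ (n / 2) *
            ∑ i ∈ Finset.Icc 1 (n / 2 - 1), c i * (Real.log y : ℂ) ^ i)) x
        - 4 * (n : ℂ) ^ n * ((x : ℂ) ^ n)⁻¹ *
            DlogShift ((n : ℂ) / 2) (DlogShift (n : ℂ)
              (fun y : ℝ => (y : ℂ) ^ (n / 2) *
                ∑ i ∈ Finset.Icc 1 (n / 2 - 1), c i * (Real.log y : ℂ) ^ i)) x
        = 0) :
    ∀ i ∈ Finset.Icc 1 (n / 2 - 1), c i = 0 := by
  obtain ⟨m, hnm⟩ : ∃ m, n = 2 * m := hev.exists_two_nsmul n |>.imp fun _ h => by simpa using h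
  rw [show n / 2 = m by omega] at h ⊢
  set p : ℂ[X] := ∑ i ∈ Icc 1 (m - 1), C (c i) * X ^ i
  have hcoeff (j : ℕ) : p.coeff j = if 1 ≤ j ∧ j ≤ m - 1 then c j else 0 := by simp [p]
  have hf : (fun y : ℝ => (y : ℂ) ^ m * ∑ i ∈ Icc 1 (m - 1), c i * (Real.log y : ℂ) ^ i)
      = powLogPoly m p := by
    ext y; simp [powLogPoly, p, eval_finsetSum]
  have hnC : (n : ℂ) = 2 * m := by rw [hnm]; push_cast; ring
  rw [hf, show (n : ℂ) ^ 2 / 4 = (m : ℂ) ^ 2 by rw [hnC]; ring,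
    show (n : ℂ) / 2 = m by rw [hnC]; ring, hnC] at h
  have hp : p = 0 := by
    refine eq_zero_of_broadPF_powLogPoly_eq_zero (by omega) ?_ (by simp [hcoeff]) ?_ h
    · exact natDegree_sum_le_of_forall_le _ _ fun i hi =>
        (natDegree_C_mul_X_pow_le (c i) i).trans ((mem_Icc.1 hi).2.trans (Nat.sub_le m 1))
    · intro x hx
      simp [hx.ne', show m ≠ 0 by omega]
  intro i hi
  simpa [hp, mem_Icc.1 hi] using (hcoeff i).symm
end
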